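/- arXiv:2510.08307 — 6 statements merged into one kernel-verified Lean document; each statement's English description precedes it below -/
import Mathlib

section
/- Let n and s be integers with 5 ≤ s ≤ n−1, let Γ, X₁, …, X_s be smooth vector fields on ℝ^n, and let h₁, …, h_{s−2} be smooth functions on ℝ^n with Γ h_j = 0 for all j = 1, …, s−2. Then for every smooth function f on ℝ^n, B(f, h₁, …, h_{s−2}) = h̃ · (Γ f), where B is the (s−1)-ary bracket induced by 𝒩 = Γ∧X₁∧⋯∧X_{s−2} + Γ∧X₁∧⋯∧X_{s−4}∧X_{s−1}∧X_s and h̃ is the associated multiplier; in particular Γ is quasi-generalized Hamiltonian with respect to 𝒩. -/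
/-- A (not necessarily smooth) vector field on `ℝⁿ`, i.e. a map `ℝⁿ → ℝⁿ`. -/
abbrev VF (n : ℕ) : Type := (Fin n → ℝ) → (Fin n → ℝ)

/-- The action of a vector field `X` on a function `f`:
`(X f)(x) = Df(x)[X(x)]` (directional derivative). -/
noncomputable def vAct {n : ℕ} (X : VF n) (f : (Fin n → ℝ) → ℝ) : (Fin n → ℝ) → ℝ :=
  fun x => fderiv ℝ f x (X x)

/-- The Lie bracket of two vector fields:
`[X, Y](x) = DY(x)[X(x)] − DX(x)[Y(x)]`. -/
noncomputable def vLie {n : ℕ} (X Y : VF n) : VF n :=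
  fun x => fderiv ℝ Y x (X x) - fderiv ℝ X x (Y x)

/-- The `m`-ary bracket induced by the decomposable `m`-vector field `Z 0 ∧ ⋯ ∧ Z (m-1)`:
the determinant of the matrix whose `(i, j)` entry is `(Z i) (f j)`. -/
noncomputable def detBracket {n m : ℕ} (Z : Fin m → VF n)
    (f : Fin m → ((Fin n → ℝ) → ℝ)) : (Fin n → ℝ) → ℝ :=
  fun x => Matrix.det (Matrix.of fun i j => vAct (Z i) (f j) x)

/-- The generalized Jacobi identity of order `m` for an `m`-ary bracket `B` on smooth
functions on `ℝⁿ`: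
`∑_{σ ∈ S_{2m−1}} sign σ • B(B(f_{σ(1)}, …, f_{σ(m)}), f_{σ(m+1)}, …, f_{σ(2m−1)}) = 0`. -/
def GJI (n m : ℕ) (B : (Fin m → ((Fin n → ℝ) → ℝ)) → ((Fin n → ℝ) → ℝ)) : Prop :=
  ∀ f : Fin (2 * m - 1) → ((Fin n → ℝ) → ℝ), (∀ i, ContDiff ℝ (⊤ : ℕ∞) (f i)) →
    ∀ x, (∑ σ : Equiv.Perm (Fin (2 * m - 1)),
      ((Equiv.Perm.sign σ : ℤ) : ℝ) *
        B (fun i : Fin m =>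
            if _hi : (i : ℕ) = 0 then
              B (fun k : Fin m => f (σ ⟨(k : ℕ), lt_of_lt_of_le k.isLt (by omega)⟩))
            else f (σ ⟨m - 1 + (i : ℕ), by have hi := i.isLt; omega⟩)) x) = 0

/-- Rows `(Γ, X₁, …, X_{s−4}, X_{s−3}, X_{s−2})` of the first summand of `𝒩`
(here `X i` denotes `X_{i+1}`). -/
noncomputable def rowsM {n : ℕ} (s : ℕ) (Γ : VF n) (X : Fin s → VF n) :
    Fin (s - 1) → VF n :=
  fun i =>
    if _hi : (i : ℕ) = 0 then Γ
    else X ⟨(i : ℕ) - 1, by have := i.isLt; omega⟩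

/-- Rows `(Γ, X₁, …, X_{s−4}, X_{s−1}, X_s)` of the second summand of `𝒩`
(here `X i` denotes `X_{i+1}`). -/
noncomputable def rowsM' {n : ℕ} (s : ℕ) (Γ : VF n) (X : Fin s → VF n) :
    Fin (s - 1) → VF n :=
  fun i =>
    if _hi : (i : ℕ) = 0 then Γ
    else if (i : ℕ) ≤ s - 4 then X ⟨(i : ℕ) - 1, by have := i.isLt; omega⟩
    else X ⟨(i : ℕ) + 1, by have := i.isLt; omega⟩

/-- Rows `(X₁, …, X_{s−4}, X_{s−3}, X_{s−2})` of the first summand of the multiplier. -/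
noncomputable def rowsA {n : ℕ} (s : ℕ) (X : Fin s → VF n) : Fin (s - 2) → VF n :=
  fun i => X ⟨(i : ℕ), by have := i.isLt; omega⟩

/-- Rows `(X₁, …, X_{s−4}, X_{s−1}, X_s)` of the second summand of the multiplier. -/
noncomputable def rowsA' {n : ℕ} (s : ℕ) (X : Fin s → VF n) : Fin (s - 2) → VF n :=
  fun i =>
    if (i : ℕ) < s - 4 then X ⟨(i : ℕ), by have := i.isLt; omega⟩
    else X ⟨(i : ℕ) + 2, by have := i.isLt; omega⟩

/-- The argument tuple `(f, h₁, …, h_{s−2})` for the bracket `B`. -/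
def consArg {n : ℕ} (s : ℕ) (f : (Fin n → ℝ) → ℝ)
    (h : Fin (s - 2) → ((Fin n → ℝ) → ℝ)) : Fin (s - 1) → ((Fin n → ℝ) → ℝ) :=
  fun k =>
    if _hk : (k : ℕ) = 0 then f
    else h ⟨(k : ℕ) - 1, by have := k.isLt; omega⟩

/-!
Since every `hⱼ` is a first integral of `Γ`, the row `Γ` of both matrices of the bracket reads
`(Γ f, 0, …, 0)`. Expanding both determinants along that row leaves `Γ f` times the minors
obtained by deleting the row `Γ` and the column `f`, and these minors are exactly the two
matrices of the multiplier.
-/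

lemma detBracket_comp_cast {n k m : ℕ} (e : m = k) (Z : Fin k → VF n)
    (f : Fin k → ((Fin n → ℝ) → ℝ)) :
    detBracket (Z ∘ Fin.cast e) (f ∘ Fin.cast e) = detBracket Z f := by
  subst e
  rfl

lemma detBracket_cons_of_vAct_eq_zero {n m : ℕ} (Y : VF n) (A : Fin m → VF n)
    (f : (Fin n → ℝ) → ℝ) (g : Fin m → ((Fin n → ℝ) → ℝ)) (x : Fin n → ℝ)
    (hY : ∀ j, vAct Y (g j) x = 0) :
    detBracket (Fin.cons Y A) (Fin.cons f g) x = vAct Y f x * detBracket A g x := by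
  rw [detBracket, Matrix.det_succ_row_zero, Fin.sum_univ_succ]
  simp [hY, Matrix.submatrix, detBracket]

lemma rowsM_comp_cast {n s : ℕ} (e : s - 2 + 1 = s - 1) (Γ : VF n) (X : Fin s → VF n) :
    rowsM s Γ X ∘ Fin.cast e = Fin.cons Γ (rowsA s X) := by
  funext i
  refine Fin.cases ?_ (fun j => ?_) i
  · simp [rowsM]
  · simp [rowsM, rowsA]

lemma rowsM'_comp_cast {n s : ℕ} (e : s - 2 + 1 = s - 1) (Γ : VF n) (X : Fin s → VF n) :
    rowsM' s Γ X ∘ Fin.cast e = Fin.cons Γ (rowsA' s X) := by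
  funext i
  refine Fin.cases ?_ (fun j => ?_) i
  · simp [rowsM']
  · simp [rowsM', rowsA']

lemma consArg_comp_cast {n s : ℕ} (e : s - 2 + 1 = s - 1) (f : (Fin n → ℝ) → ℝ)
    (h : Fin (s - 2) → ((Fin n → ℝ) → ℝ)) :
    consArg s f h ∘ Fin.cast e = Fin.cons f h := by
  funext i
  refine Fin.cases ?_ (fun j => ?_) i
  · simp [consArg]
  · simp [consArg]

theorem statement1_general (n s : ℕ) (hs : 5 ≤ s)
    (Γ : VF n) (X : Fin s → VF n) (h : Fin (s - 2) → ((Fin n → ℝ) → ℝ))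
    (hfi : ∀ j, vAct Γ (h j) = 0) :
    ∀ f : (Fin n → ℝ) → ℝ, ContDiff ℝ (⊤ : ℕ∞) f → ∀ x,
      detBracket (rowsM s Γ X) (consArg s f h) x
        + detBracket (rowsM' s Γ X) (consArg s f h) x
      = (detBracket (rowsA s X) h x + detBracket (rowsA' s X) h x) * vAct Γ f x := by
  intro f _ x
  have e : s - 2 + 1 = s - 1 := by omega
  rw [← detBracket_comp_cast e (rowsM s Γ X), ← detBracket_comp_cast e (rowsM' s Γ X),
    rowsM_comp_cast e, rowsM'_comp_cast e, consArg_comp_cast e,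
    detBracket_cons_of_vAct_eq_zero _ _ _ _ x (fun j => congrFun (hfi j) x),
    detBracket_cons_of_vAct_eq_zero _ _ _ _ x (fun j => congrFun (hfi j) x)]
  ring

/-- With `5 ≤ s ≤ n − 1`, vector fields `Γ, X₁, …, X_s` and first
integrals `h₁, …, h_{s−2}` of `Γ`, one has `B(f, h₁, …, h_{s−2}) = h̃ ⬝ (Γ f)` for every
smooth `f`, where `B` is the `(s−1)`-ary bracket induced by
`𝒩 = Γ∧X₁∧⋯∧X_{s−2} + Γ∧X₁∧⋯∧X_{s−4}∧X_{s−1}∧X_s` and `h̃` is the associated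
multiplier; in particular `Γ` is quasi-generalized Hamiltonian with respect to `𝒩`. -/
theorem statement1 (n s : ℕ) (hs : 5 ≤ s) (hn : s + 1 ≤ n)
    (Γ : VF n) (X : Fin s → VF n) (h : Fin (s - 2) → ((Fin n → ℝ) → ℝ))
    (hΓ : ContDiff ℝ (⊤ : ℕ∞) Γ) (hX : ∀ i, ContDiff ℝ (⊤ : ℕ∞) (X i))
    (hh : ∀ j, ContDiff ℝ (⊤ : ℕ∞) (h j))
    (hfi : ∀ j, vAct Γ (h j) = 0) :
    ∀ f : (Fin n → ℝ) → ℝ, ContDiff ℝ (⊤ : ℕ∞) f → ∀ x,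
      detBracket (rowsM s Γ X) (consArg s f h) x
        + detBracket (rowsM' s Γ X) (consArg s f h) x
      = (detBracket (rowsA s X) h x + detBracket (rowsA' s X) h x) * vAct Γ f x :=
  statement1_general n s hs Γ X h hfi
end

section
/- Let n and s be integers with 5 ≤ s ≤ n−1, let Γ, X₁, …, X_s be smooth vector fields on ℝ^n with [X_i, Γ] = 0 for all i = 1, …, s, and let h₁, …, h_{s−2} be smooth functions with Γ h_j = 0 for all j = 1, …, s−2. Then the multiplier h̃ is itself a first integral of Γ, i.e. Γ h̃ = 0 identically on ℝ^n. -/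
lemma contDiff_vAct {n : ℕ} {X : VF n} {f : (Fin n → ℝ) → ℝ}
    (hX : ContDiff ℝ (⊤ : ℕ∞) X) (hf : ContDiff ℝ (⊤ : ℕ∞) f) :
    ContDiff ℝ (⊤ : ℕ∞) (vAct X f) :=
  (hf.fderiv_right (le_of_eq (by simp))).clm_apply hX

lemma vAct_comm_zero {n : ℕ} {Γ X : VF n} {f : (Fin n → ℝ) → ℝ}
    (hΓ : ContDiff ℝ (⊤ : ℕ∞) Γ) (hX : ContDiff ℝ (⊤ : ℕ∞) X)
    (hf : ContDiff ℝ (⊤ : ℕ∞) f)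
    (hlie : vLie X Γ = 0) (hint : vAct Γ f = 0) : vAct Γ (vAct X f) = 0 := by
  funext x
  have hf' : ContDiff ℝ (⊤ : ℕ∞) (fderiv ℝ f) := hf.fderiv_right (le_of_eq (by simp))
  have hdf' : DifferentiableAt ℝ (fderiv ℝ f) x :=
    (hf'.differentiable (by simp)).differentiableAt
  have hdX : DifferentiableAt ℝ X x :=
    (hX.differentiable (by simp)).differentiableAt
  have hdΓ : DifferentiableAt ℝ Γ x :=
    (hΓ.differentiable (by simp)).differentiableAt
  have h2top : (2 : WithTop ℕ∞) ≤ ((⊤ : ℕ∞) : WithTop ℕ∞) := by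
    refine le_trans ?_ (WithTop.coe_le_coe.mpr (le_top : (2 : ℕ∞) ≤ ⊤))
    norm_cast
  have hsym : fderiv ℝ (fderiv ℝ f) x (Γ x) (X x) = fderiv ℝ (fderiv ℝ f) x (X x) (Γ x) :=
    (hf.contDiffAt.isSymmSndFDerivAt (by simpa [minSmoothness_of_isRCLikeNormedField] using h2top)).eq _ _
  have h1 : fderiv ℝ (fun y => fderiv ℝ f y (X y)) x (Γ x)
      = fderiv ℝ (fderiv ℝ f) x (Γ x) (X x) + fderiv ℝ f x (fderiv ℝ X x (Γ x)) := by
    rw [fderiv_clm_apply (c := fderiv ℝ f) (u := X) hdf' hdX]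
    simp only [ContinuousLinearMap.add_apply, ContinuousLinearMap.flip_apply,
      ContinuousLinearMap.comp_apply]
    ring
  have h0 : fderiv ℝ (fun y => fderiv ℝ f y (Γ y)) x (X x) = 0 := by
    have hzero : (fun y => fderiv ℝ f y (Γ y)) = (0 : (Fin n → ℝ) → ℝ) := hint
    rw [hzero]
    rw [show (0 : (Fin n → ℝ) → ℝ) = fun _ => (0 : ℝ) from rfl,
      (hasFDerivAt_const (0 : ℝ) x).fderiv]
    simp
  rw [fderiv_clm_apply (c := fderiv ℝ f) (u := Γ) hdf' hdΓ] at h0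
  simp only [ContinuousLinearMap.add_apply, ContinuousLinearMap.flip_apply,
    ContinuousLinearMap.comp_apply] at h0
  have hl : fderiv ℝ Γ x (X x) = fderiv ℝ X x (Γ x) := by
    have := congrFun hlie x
    simp only [vLie, Pi.zero_apply, sub_eq_zero] at this
    exact this
  rw [hl] at h0
  show fderiv ℝ (fun y => fderiv ℝ f y (X y)) x (Γ x) = 0
  rw [h1, hsym]
  linarith

lemma differentiable_detfn {n m : ℕ} (M : Fin m → Fin m → ((Fin n → ℝ) → ℝ))
    (hM : ∀ i j, Differentiable ℝ (M i j)) :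
    Differentiable ℝ (fun x => Matrix.det (Matrix.of fun i j => M i j x)) := by
  have : (fun x => Matrix.det (Matrix.of fun i j => M i j x))
      = fun x => ∑ σ : Equiv.Perm (Fin m),
          ((Equiv.Perm.sign σ : ℤ) : ℝ) * ∏ i, M (σ i) i x := by
    funext x
    rw [Matrix.det_apply']
    simp [Units.smul_def, zsmul_eq_mul]
  rw [this]
  intro x
  refine DifferentiableAt.fun_sum fun σ _ => DifferentiableAt.const_mul ?_ _
  exact (HasFDerivAt.finset_prod (fun i _ => ((hM (σ i) i) x).hasFDerivAt)).differentiableAt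

lemma vAct_detfn_zero {n m : ℕ} (Γ : VF n) (M : Fin m → Fin m → ((Fin n → ℝ) → ℝ))
    (hM : ∀ i j, Differentiable ℝ (M i j))
    (hz : ∀ i j, vAct Γ (M i j) = 0) :
    vAct Γ (fun x => Matrix.det (Matrix.of fun i j => M i j x)) = 0 := by
  funext x
  have hrw : (fun x => Matrix.det (Matrix.of fun i j => M i j x))
      = fun x => ∑ σ : Equiv.Perm (Fin m),
          ((Equiv.Perm.sign σ : ℤ) : ℝ) * ∏ i, M (σ i) i x := by
    funext x
    rw [Matrix.det_apply']
    simp [Units.smul_def, zsmul_eq_mul]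
  have Hσ : ∀ σ : Equiv.Perm (Fin m), HasFDerivAt (fun x => ∏ i, M (σ i) i x)
      (∑ i, (∏ j ∈ Finset.univ.erase i, M (σ j) j x) • fderiv ℝ (M (σ i) i) x) x :=
    fun σ => HasFDerivAt.finset_prod (fun i _ => ((hM (σ i) i) x).hasFDerivAt)
  have Hg : HasFDerivAt (fun x => ∑ σ : Equiv.Perm (Fin m),
      ((Equiv.Perm.sign σ : ℤ) : ℝ) * ∏ i, M (σ i) i x)
      (∑ σ : Equiv.Perm (Fin m), ((Equiv.Perm.sign σ : ℤ) : ℝ) •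
        ∑ i, (∏ j ∈ Finset.univ.erase i, M (σ j) j x) • fderiv ℝ (M (σ i) i) x) x :=
    HasFDerivAt.fun_sum fun σ _ => (Hσ σ).const_mul _
  have hz' : ∀ i j, fderiv ℝ (M i j) x (Γ x) = 0 := fun i j => congrFun (hz i j) x
  show fderiv ℝ _ x (Γ x) = 0
  rw [hrw, Hg.fderiv]
  simp [ContinuousLinearMap.sum_apply, hz']

/-- With `5 ≤ s ≤ n − 1`, smooth vector fields `Γ, X₁, …, X_s` on `ℝⁿ`
satisfying `[Xᵢ, Γ] = 0`, and first integrals `h₁, …, h_{s−2}` of `Γ`, the multiplier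
`h̃ = det A + det A′` is itself a first integral of `Γ`: `Γ h̃ = 0` identically. -/
theorem statement2 (n s : ℕ) (hs : 5 ≤ s) (hn : s + 1 ≤ n)
    (Γ : VF n) (X : Fin s → VF n) (h : Fin (s - 2) → ((Fin n → ℝ) → ℝ))
    (hΓ : ContDiff ℝ (⊤ : ℕ∞) Γ) (hX : ∀ i, ContDiff ℝ (⊤ : ℕ∞) (X i))
    (hh : ∀ j, ContDiff ℝ (⊤ : ℕ∞) (h j))
    (hXΓ : ∀ i, vLie (X i) Γ = 0)
    (hfi : ∀ j, vAct Γ (h j) = 0) :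
    vAct Γ (fun x => detBracket (rowsA s X) h x + detBracket (rowsA' s X) h x) = 0 := by
  have hW1 : ∀ i, ContDiff ℝ (⊤ : ℕ∞) (rowsA s X i) := by
    intro i; unfold rowsA; exact hX _
  have hW2 : ∀ i, ContDiff ℝ (⊤ : ℕ∞) (rowsA' s X i) := by
    intro i; unfold rowsA'; split_ifs <;> exact hX _
  have hL1 : ∀ i, vLie (rowsA s X i) Γ = 0 := by
    intro i; unfold rowsA; exact hXΓ _
  have hL2 : ∀ i, vLie (rowsA' s X i) Γ = 0 := by
    intro i; unfold rowsA'; split_ifs <;> exact hXΓ _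
  have hM1d : ∀ i j, Differentiable ℝ (vAct (rowsA s X i) (h j)) := fun i j =>
    (contDiff_vAct (hW1 i) (hh j)).differentiable (by simp)
  have hM2d : ∀ i j, Differentiable ℝ (vAct (rowsA' s X i) (h j)) := fun i j =>
    (contDiff_vAct (hW2 i) (hh j)).differentiable (by simp)
  have hM1z : ∀ i j, vAct Γ (vAct (rowsA s X i) (h j)) = 0 := fun i j =>
    vAct_comm_zero hΓ (hW1 i) (hh j) (hL1 i) (hfi j)
  have hM2z : ∀ i j, vAct Γ (vAct (rowsA' s X i) (h j)) = 0 := fun i j =>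
    vAct_comm_zero hΓ (hW2 i) (hh j) (hL2 i) (hfi j)
  have D1 : vAct Γ (detBracket (rowsA s X) h) = 0 :=
    vAct_detfn_zero Γ (fun i j => vAct (rowsA s X i) (h j)) hM1d hM1z
  have D2 : vAct Γ (detBracket (rowsA' s X) h) = 0 :=
    vAct_detfn_zero Γ (fun i j => vAct (rowsA' s X i) (h j)) hM2d hM2z
  have Df1 : Differentiable ℝ (detBracket (rowsA s X) h) :=
    differentiable_detfn (fun i j => vAct (rowsA s X i) (h j)) hM1d
  have Df2 : Differentiable ℝ (detBracket (rowsA' s X) h) :=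
    differentiable_detfn (fun i j => vAct (rowsA' s X i) (h j)) hM2d
  funext x
  have e1 : fderiv ℝ (detBracket (rowsA s X) h) x (Γ x) = 0 := congrFun D1 x
  have e2 : fderiv ℝ (detBracket (rowsA' s X) h) x (Γ x) = 0 := congrFun D2 x
  show fderiv ℝ (fun x => detBracket (rowsA s X) h x + detBracket (rowsA' s X) h x) x (Γ x) = 0
  rw [fderiv_fun_add (Df1 x) (Df2 x)]
  simp [ContinuousLinearMap.add_apply, e1, e2]
end

section
/- Let n and s be integers with 5 ≤ s ≤ n−1, and let Γ, X₁, …, X_s be smooth vector fields on ℝ^n with [X_i, Γ] = 0 for all i = 1, …, s. Then Γ is a derivation of the (s−1)-ary bracket B induced by 𝒩 = Γ∧X₁∧⋯∧X_{s−2} + Γ∧X₁∧⋯∧X_{s−4}∧X_{s−1}∧X_s: for all smooth functions f₁, …, f_{s−1}, Γ(B(f₁, …, f_{s−1})) = Σ_{j=1}^{s−1} B(f₁, …, f_{j−1}, Γ f_j, f_{j+1}, …, f_{s−1}). (This expresses the invariance L_Γ 𝒩 = 0 of the tensor under the flow of Γ.) -/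
open scoped ContDiff

section Determinant

variable {𝕜 ι : Type*} [NontriviallyNormedField 𝕜] [Fintype ι] [DecidableEq ι]

variable (𝕜 ι) in
noncomputable def detColumns : ContinuousMultilinearMap 𝕜 (fun _ : ι => ι → 𝕜) 𝕜 where
  toMultilinearMap := Matrix.detRowAlternating.toMultilinearMap
  cont := continuous_id.matrix_det

lemma detColumns_apply (c : ι → ι → 𝕜) :
    detColumns 𝕜 ι c = (Matrix.of fun i j => c j i).det := by
  rw [← Matrix.det_transpose]
  rfl

lemma hasFDerivAt_det_columns {E : Type*} [NormedAddCommGroup E] [NormedSpace 𝕜 E]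
    {c : ι → E → ι → 𝕜} {c' : ι → E →L[𝕜] ι → 𝕜} {x : E} (hc : ∀ j, HasFDerivAt (c j) (c' j) x) :
    HasFDerivAt (fun y => (Matrix.of fun i j => c j y i).det)
      (∑ j, ((detColumns 𝕜 ι).toContinuousLinearMap (fun k => c k x) j).comp (c' j)) x := by
  simpa only [detColumns_apply] using HasFDerivAt.multilinear_comp (detColumns 𝕜 ι) hc

end Determinant

variable {n : ℕ}

lemma vLie_self (Γ : VF n) : vLie Γ Γ = 0 :=
  funext fun _ => sub_self _

lemma vAct_add {Γ : VF n} {g h : (Fin n → ℝ) → ℝ} {x : Fin n → ℝ}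
    (hg : DifferentiableAt ℝ g x) (hh : DifferentiableAt ℝ h x) :
    vAct Γ (fun y => g y + h y) x = vAct Γ g x + vAct Γ h x := by
  simp only [vAct, fderiv_fun_add hg hh, add_apply]

lemma ContDiff.vAct {Z : VF n} {f : (Fin n → ℝ) → ℝ} (hZ : ContDiff ℝ ∞ Z)
    (hf : ContDiff ℝ ∞ f) : ContDiff ℝ ∞ (vAct Z f) :=
  (hf.fderiv_right (by simp)).clm_apply hZ

lemma vAct_comm_of_vLie_eq_zero {Γ Z : VF n} {f : (Fin n → ℝ) → ℝ} {x : Fin n → ℝ}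
    (hf : ContDiffAt ℝ 2 f x) (hΓ : DifferentiableAt ℝ Γ x) (hZ : DifferentiableAt ℝ Z x)
    (h : vLie Z Γ x = 0) :
    vAct Γ (vAct Z f) x = vAct Z (vAct Γ f) x := by
  have hDf : DifferentiableAt ℝ (fderiv ℝ f) x :=
    (hf.fderiv_right (m := 1) le_rfl).differentiableAt one_ne_zero
  have hsymm : IsSymmSndFDerivAt ℝ f x :=
    hf.isSymmSndFDerivAt (by simp [minSmoothness_of_isRCLikeNormedField])
  have hlie : fderiv ℝ Γ x (Z x) = fderiv ℝ Z x (Γ x) := sub_eq_zero.mp h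
  change fderiv ℝ (fun y => fderiv ℝ f y (Z y)) x (Γ x)
    = fderiv ℝ (fun y => fderiv ℝ f y (Γ y)) x (Z x)
  simp only [fderiv_clm_apply hDf hZ, fderiv_clm_apply hDf hΓ, add_apply,
    ContinuousLinearMap.comp_apply, ContinuousLinearMap.flip_apply, hlie, hsymm (Γ x) (Z x)]

lemma hasFDerivAt_detBracket {m : ℕ} {Z : Fin m → VF n} {f : Fin m → (Fin n → ℝ) → ℝ}
    (hZ : ∀ i, ContDiff ℝ ∞ (Z i)) (hf : ∀ j, ContDiff ℝ ∞ (f j)) (x : Fin n → ℝ) :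
    HasFDerivAt (detBracket Z f)
      (∑ j, ((detColumns ℝ (Fin m)).toContinuousLinearMap (fun k i => vAct (Z i) (f k) x) j).comp
        (ContinuousLinearMap.pi fun i => fderiv ℝ (vAct (Z i) (f j)) x)) x := by
  have hdiff : ∀ i j, DifferentiableAt ℝ (vAct (Z i) (f j)) x := fun i j =>
    ((hZ i).vAct (hf j)).differentiable (by simp) x
  exact hasFDerivAt_det_columns fun j => hasFDerivAt_pi.2 fun i => (hdiff i j).hasFDerivAt

lemma vAct_detBracket {Γ : VF n} {m : ℕ} {Z : Fin m → VF n} {f : Fin m → (Fin n → ℝ) → ℝ}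
    (hΓ : ContDiff ℝ ∞ Γ) (hZ : ∀ i, ContDiff ℝ ∞ (Z i)) (hZΓ : ∀ i, vLie (Z i) Γ = 0)
    (hf : ∀ j, ContDiff ℝ ∞ (f j)) (x : Fin n → ℝ) :
    vAct Γ (detBracket Z f) x = ∑ j, detBracket Z (Function.update f j (vAct Γ (f j))) x := by
  rw [vAct, (hasFDerivAt_detBracket hZ hf x).fderiv]
  simp only [sum_apply, ContinuousLinearMap.comp_apply,
    ContinuousMultilinearMap.toContinuousLinearMap_apply, detColumns_apply]
  refine Finset.sum_congr rfl fun j _ => congrArg Matrix.det (Matrix.ext fun i k => ?_)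
  rcases eq_or_ne k j with rfl | hkj
  · simp only [Matrix.of_apply, Function.update_self]
    exact vAct_comm_of_vLie_eq_zero ((hf k).contDiffAt.of_le ENat.LEInfty.out)
      (hΓ.differentiable (by simp) x) ((hZ i).differentiable (by simp) x) (congrFun (hZΓ i) x)
  · simp only [Matrix.of_apply, Function.update_of_ne hkj]

lemma rowsM_mem (s : ℕ) (Γ : VF n) (X : Fin s → VF n) (i : Fin (s - 1)) :
    rowsM s Γ X i ∈ insert Γ (Set.range X) := by
  unfold rowsM
  split_ifs <;> simp

lemma rowsM'_mem (s : ℕ) (Γ : VF n) (X : Fin s → VF n) (i : Fin (s - 1)) :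
    rowsM' s Γ X i ∈ insert Γ (Set.range X) := by
  unfold rowsM'
  split_ifs <;> simp

theorem statement3_general (n s : ℕ)
    (Γ : VF n) (X : Fin s → VF n)
    (hΓ : ContDiff ℝ (⊤ : ℕ∞) Γ) (hX : ∀ i, ContDiff ℝ (⊤ : ℕ∞) (X i))
    (hXΓ : ∀ i, vLie (X i) Γ = 0) :
    ∀ f : Fin (s - 1) → ((Fin n → ℝ) → ℝ), (∀ i, ContDiff ℝ (⊤ : ℕ∞) (f i)) → ∀ x,
      vAct Γ (fun y => detBracket (rowsM s Γ X) f y + detBracket (rowsM' s Γ X) f y) x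
      = ∑ j : Fin (s - 1),
          (detBracket (rowsM s Γ X) (Function.update f j (vAct Γ (f j))) x
            + detBracket (rowsM' s Γ X) (Function.update f j (vAct Γ (f j))) x) := by
  intro f hf x
  have hrow : ∀ Z ∈ insert Γ (Set.range X), ContDiff ℝ ∞ Z ∧ vLie Z Γ = 0 := by
    rintro Z (rfl | ⟨i, rfl⟩)
    exacts [⟨hΓ, vLie_self Z⟩, ⟨hX i, hXΓ i⟩]
  have hM := fun i => hrow _ (rowsM_mem s Γ X i)
  have hM' := fun i => hrow _ (rowsM'_mem s Γ X i)
  rw [vAct_add (hasFDerivAt_detBracket (fun i => (hM i).1) hf x).differentiableAt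
      (hasFDerivAt_detBracket (fun i => (hM' i).1) hf x).differentiableAt,
    vAct_detBracket hΓ (fun i => (hM i).1) (fun i => (hM i).2) hf x,
    vAct_detBracket hΓ (fun i => (hM' i).1) (fun i => (hM' i).2) hf x, Finset.sum_add_distrib]

/-- With `5 ≤ s ≤ n − 1` and smooth vector fields `Γ, X₁, …, X_s` on `ℝⁿ`
satisfying `[Xᵢ, Γ] = 0`, the field `Γ` is a derivation of the `(s−1)`-ary bracket `B`
induced by `𝒩 = Γ∧X₁∧⋯∧X_{s−2} + Γ∧X₁∧⋯∧X_{s−4}∧X_{s−1}∧X_s`: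
`Γ(B(f₁, …, f_{s−1})) = ∑ⱼ B(f₁, …, Γ fⱼ, …, f_{s−1})` (i.e. `L_Γ 𝒩 = 0`). -/
theorem statement3 (n s : ℕ) (hs : 5 ≤ s) (hn : s + 1 ≤ n)
    (Γ : VF n) (X : Fin s → VF n)
    (hΓ : ContDiff ℝ (⊤ : ℕ∞) Γ) (hX : ∀ i, ContDiff ℝ (⊤ : ℕ∞) (X i))
    (hXΓ : ∀ i, vLie (X i) Γ = 0) :
    ∀ f : Fin (s - 1) → ((Fin n → ℝ) → ℝ), (∀ i, ContDiff ℝ (⊤ : ℕ∞) (f i)) → ∀ x,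
      vAct Γ (fun y => detBracket (rowsM s Γ X) f y + detBracket (rowsM' s Γ X) f y) x
      = ∑ j : Fin (s - 1),
          (detBracket (rowsM s Γ X) (Function.update f j (vAct Γ (f j))) x
            + detBracket (rowsM' s Γ X) (Function.update f j (vAct Γ (f j))) x) :=
  statement3_general n s Γ X hΓ hX hXΓ
end

section
/- Let n ≥ 1 and m ≥ 3 be integers and let N be a smooth m-vector field on ℝ^n. If the induced m-ary bracket {f₁, …, f_m}(x) = N_x(df₁(x), …, df_m(x)) satisfies the fundamental identity for all smooth functions (i.e. N is a Nambu–Poisson tensor of order m ≥ 3), then this bracket satisfies the generalized Jacobi identity of order m (i.e. N is a generalized Poisson tensor). -/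
/-- The `m`-ary bracket induced by an `m`-vector field `N` on `ℝⁿ` (an assignment of an
alternating `m`-linear form on the dual space to each point):
`{f₁, …, f_m}(x) = N_x(df₁(x), …, df_m(x))`. -/
noncomputable def mvBracket {n m : ℕ}
    (N : (Fin n → ℝ) → (((Fin n → ℝ) →L[ℝ] ℝ) [⋀^Fin m]→ₗ[ℝ] ℝ))
    (f : Fin m → ((Fin n → ℝ) → ℝ)) : (Fin n → ℝ) → ℝ :=
  fun x => N x (fun i => fderiv ℝ (f i) x)

/-!
Write `S` for the alternating sum in the generalized Jacobi identity. Apply the fundamental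
identity with `f = (u_m, …, u_{2m-2})` and `g = (u_0, …, u_{m-1})`, multiply by `sign σ` and
sum over all permutations `σ` of the arguments `u`. Rotating the arguments of the outer bracket
turns the left-hand side into `(-1)^(m-1) • S`. Each of the `m` summands on the right becomes `S`
after a transposition moving `g_j` to the front and a rotation of the `2m - 1` arguments by `m`,
an even permutation. Hence `(-1)^(m-1) • S = m • S`, and `S = 0` since `m ≥ 2`.
-/

open Equiv Equiv.Perm Finset Function

theorem Equiv.Perm.sum_sign_smul_comp_mul {ι α F : Type*} [Fintype ι] [DecidableEq ι]
    [AddCommGroup F] (Φ : (ι → α) → F) (u : ι → α) (ρ : Perm ι) :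
    ∑ σ : Perm ι, sign σ • Φ (u ∘ ⇑(σ * ρ)) = sign ρ • ∑ σ : Perm ι, sign σ • Φ (u ∘ σ) := by
  refine (Fintype.sum_equiv (Equiv.mulRight ρ) _ _ fun σ => ?_).trans (smul_sum ..).symm
  rw [coe_mulRight, smul_smul, sign_mul, mul_left_comm, Int.units_mul_self, mul_one]

theorem val_finRotate_pow {K : ℕ} (i : Fin K) (j : ℕ) :
    ((finRotate K ^ j) i : ℕ) = (i + j) % K := by
  have : NeZero K := i.neZero
  induction j with
  | zero => simp [Nat.mod_eq_of_lt i.isLt]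
  | succ j ih =>
    rw [pow_succ', Perm.mul_apply, finRotate_apply, Fin.val_add, ih, Fin.val_one', ← Nat.add_mod,
      add_assoc]

theorem val_finRotate_pow_of_le {K : ℕ} (i : Fin K) {j : ℕ} (hj : j ≤ K) :
    ((finRotate K ^ j) i : ℕ) = if i + j < K then i + j else i + j - K := by
  rw [val_finRotate_pow]
  split_ifs with h
  · exact Nat.mod_eq_of_lt h
  · rw [Nat.mod_eq_sub_mod (by omega), Nat.mod_eq_of_lt (by omega)]

theorem Equiv.Perm.sign_finRotate_of_odd {K : ℕ} (hK : Odd K) : sign (finRotate K) = 1 := by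
  obtain ⟨k, rfl⟩ := hK
  rw [sign_finRotate, Nat.add_sub_cancel, (even_two_mul k).neg_one_pow]

namespace NaryBracket

def IsSkewSymmetric {α F : Type*} [AddCommGroup F] {m : ℕ} (B : (Fin m → α) → F) : Prop :=
  ∀ (g : Fin m → α) (σ : Perm (Fin m)), B (g ∘ σ) = sign σ • B g

variable {F : Type*} {m : ℕ}

def appendLast (f : Fin (m - 1) → F) (y : F) : Fin m → F :=
  fun i => if hi : (i : ℕ) < m - 1 then f ⟨i, hi⟩ else y

def SatisfiesFundamentalIdentity [AddCommGroup F] (P : F → Prop) (B : (Fin m → F) → F) : Prop :=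
  ∀ f : Fin (m - 1) → F, (∀ i, P (f i)) → ∀ g : Fin m → F, (∀ j, P (g j)) →
    B (appendLast f (B g)) = ∑ j, B (update g j (B (appendLast f (g j))))

def leadIdx (k : Fin m) : Fin (2 * m - 1) := ⟨k, by omega⟩

theorem leadIdx_injective : Injective (leadIdx (m := m)) :=
  fun _ _ h => Fin.ext (congrArg Fin.val h :)

def leading (v : Fin (2 * m - 1) → F) : Fin m → F := v ∘ leadIdx

def trailing (v : Fin (2 * m - 1) → F) : Fin (m - 1) → F :=
  fun i => v ⟨m + i, by have := i.isLt; omega⟩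

/- With `g = leading v` and `f = trailing v`, `jacobiTerm B v` is `{{g₁, …, g_m}, f₁, …, f_{m-1}}`
and `fundamentalTerm B v j` is `{g₁, …, {f₁, …, f_{m-1}, g_j}, …, g_m}`. -/
def jacobiTerm (B : (Fin m → F) → F) (v : Fin (2 * m - 1) → F) : F :=
  B fun i => if _hi : (i : ℕ) = 0 then B (leading v) else v ⟨m - 1 + i, by have := i.isLt; omega⟩

def fundamentalTerm (B : (Fin m → F) → F) (v : Fin (2 * m - 1) → F) (j : Fin m) : F :=
  B (update (leading v) j (B (appendLast (trailing v) (leading v j))))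

variable {B : (Fin m → F) → F}

theorem bracket_appendLast_eq_sign_smul_jacobiTerm [AddCommGroup F] (hB : IsSkewSymmetric B)
    (v : Fin (2 * m - 1) → F) :
    B (appendLast (trailing v) (B (leading v))) = sign (finRotate m) • jacobiTerm B v := by
  rw [jacobiTerm, ← hB]
  congr 1
  funext i
  have := i.isLt
  have hrot := val_finRotate_pow_of_le i (j := 1) (by omega)
  rw [pow_one] at hrot
  simp only [appendLast, comp_apply, trailing]
  split_ifs at hrot ⊢ <;> first | omega | rfl | exact congrArg v (Fin.ext (by simp only; omega))

theorem fundamentalTerm_comp_swap [AddCommGroup F] [NeZero m] (hB : IsSkewSymmetric B)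
    (v : Fin (2 * m - 1) → F) (j : Fin m) :
    fundamentalTerm B (v ∘ swap (leadIdx 0) (leadIdx j)) 0 =
      sign (swap 0 j) • fundamentalTerm B v j := by
  have hlead : leading (v ∘ swap (leadIdx 0) (leadIdx j)) = leading v ∘ swap 0 j := by
    funext k
    simp only [leading, comp_apply]
    rw [leadIdx_injective.swap_apply]
  have htrail : trailing (v ∘ swap (leadIdx 0) (leadIdx j)) = trailing v := by
    funext i
    simp only [trailing, comp_apply]
    rw [swap_apply_of_ne_of_ne] <;> simp only [leadIdx, ne_eq, Fin.ext_iff] <;> omega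
  rw [fundamentalTerm, fundamentalTerm, hlead, htrail, comp_apply, swap_apply_left, ← hB,
    update_comp_equiv, symm_swap, swap_apply_right]

theorem fundamentalTerm_zero_eq_jacobiTerm [NeZero m] (v : Fin (2 * m - 1) → F) :
    fundamentalTerm B v 0 = jacobiTerm B (v ∘ ⇑(finRotate (2 * m - 1) ^ m)) := by
  have hm : 0 < m := Nat.pos_of_neZero m
  have hrot (a : Fin (2 * m - 1)) := val_finRotate_pow_of_le a (j := m) (by omega)
  rw [fundamentalTerm, jacobiTerm]
  congr 1
  funext i
  by_cases hi : (i : ℕ) = 0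
  · obtain rfl : i = 0 := Fin.ext hi
    rw [update_self, dif_pos hi]
    congr 1
    funext k
    have := k.isLt
    simp only [leadIdx, appendLast, leading, trailing, comp_apply]
    split_ifs <;> refine congrArg v (Fin.ext ?_) <;> rw [hrot] <;>
      simp only [Fin.val_zero] <;> split_ifs <;> omega
  · have := i.isLt
    rw [update_of_ne (fun h => hi (by simp [h])), dif_neg hi]
    refine congrArg v (Fin.ext ?_)
    rw [hrot]
    simp only [leadIdx, Fin.val_mk]
    split_ifs <;> omega

theorem eq_zero_of_units_smul_eq_nsmul [AddCommGroup F] [IsAddTorsionFree F] (hm : 2 ≤ m)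
    {ε : ℤˣ} {S : F} (h : ε • S = m • S) : S = 0 := by
  have hcoef : (m : ℤ) - ε ≠ 0 := by
    rcases Int.units_eq_one_or ε with rfl | rfl <;> push_cast <;> omega
  rw [← IsAddTorsionFree.zsmul_eq_zero_iff_right hcoef, sub_smul, natCast_zsmul, ← h,
    Units.smul_def, sub_self]

theorem sum_sign_smul_fundamentalTerm [AddCommGroup F] [NeZero m] (hB : IsSkewSymmetric B)
    (u : Fin (2 * m - 1) → F) (j : Fin m) :
    ∑ σ : Perm (Fin (2 * m - 1)), sign σ • fundamentalTerm B (u ∘ σ) j =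
      ∑ σ : Perm (Fin (2 * m - 1)), sign σ • jacobiTerm B (u ∘ σ) := by
  have hsign :
      sign (swap (leadIdx 0) (leadIdx j) * finRotate (2 * m - 1) ^ m) = sign (swap 0 j) := by
    have := Nat.pos_of_neZero m
    rw [Perm.sign_mul, map_pow, sign_finRotate_of_odd ⟨m - 1, by omega⟩, one_pow, mul_one]
    simp only [sign_swap', leadIdx_injective.eq_iff]
  apply (smul_left_cancel_iff (sign (swap 0 j))).1
  rw [smul_sum]
  conv_rhs => rw [← hsign, ← sum_sign_smul_comp_mul (jacobiTerm B) u]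
  refine sum_congr rfl fun σ _ => ?_
  rw [smul_smul, mul_comm, ← smul_smul, ← fundamentalTerm_comp_swap hB,
    fundamentalTerm_zero_eq_jacobiTerm]
  rfl

theorem sum_sign_smul_jacobiTerm_eq_zero [AddCommGroup F] [IsAddTorsionFree F] {P : F → Prop}
    (hm : 2 ≤ m) (hB : IsSkewSymmetric B) (hFI : SatisfiesFundamentalIdentity P B)
    (u : Fin (2 * m - 1) → F) (hu : ∀ i, P (u i)) :
    ∑ σ : Perm (Fin (2 * m - 1)), sign σ • jacobiTerm B (u ∘ σ) = 0 := by
  have : NeZero m := ⟨by omega⟩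
  set S := ∑ σ : Perm (Fin (2 * m - 1)), sign σ • jacobiTerm B (u ∘ σ)
  refine eq_zero_of_units_smul_eq_nsmul hm (ε := sign (finRotate m)) ?_
  calc sign (finRotate m) • S
      = ∑ σ : Perm (Fin (2 * m - 1)),
          sign σ • B (appendLast (trailing (u ∘ σ)) (B (leading (u ∘ σ)))) := by
        rw [smul_sum]
        refine sum_congr rfl fun σ _ => ?_
        rw [bracket_appendLast_eq_sign_smul_jacobiTerm hB, smul_smul, mul_comm, ← smul_smul]
    _ = ∑ σ : Perm (Fin (2 * m - 1)), ∑ j, sign σ • fundamentalTerm B (u ∘ σ) j := by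
        refine sum_congr rfl fun σ _ => ?_
        rw [hFI (trailing (u ∘ σ)) (fun _ => hu _) (leading (u ∘ σ)) (fun _ => hu _), smul_sum]
        rfl
    _ = ∑ _j : Fin m, S := by
        rw [sum_comm]
        exact sum_congr rfl fun j _ => sum_sign_smul_fundamentalTerm hB u j
    _ = m • S := by rw [sum_const, card_univ, Fintype.card_fin]

end NaryBracket

open NaryBracket

theorem mvBracket_isSkewSymmetric {n m : ℕ}
    (N : (Fin n → ℝ) → (((Fin n → ℝ) →L[ℝ] ℝ) [⋀^Fin m]→ₗ[ℝ] ℝ)) :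
    IsSkewSymmetric (mvBracket N) :=
  fun g σ => funext fun x => (N x).map_perm (fun i => fderiv ℝ (g i) x) σ

theorem statement10_general (n m : ℕ) (hm : 3 ≤ m)
    (N : (Fin n → ℝ) → (((Fin n → ℝ) →L[ℝ] ℝ) [⋀^Fin m]→ₗ[ℝ] ℝ))
    (hFI : ∀ f : Fin (m - 1) → ((Fin n → ℝ) → ℝ), (∀ i, ContDiff ℝ (⊤ : ℕ∞) (f i)) →
      ∀ g : Fin m → ((Fin n → ℝ) → ℝ), (∀ j, ContDiff ℝ (⊤ : ℕ∞) (g j)) → ∀ x,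
        mvBracket N
            (fun i : Fin m =>
              if hi : (i : ℕ) < m - 1 then f ⟨(i : ℕ), hi⟩ else mvBracket N g) x
          = ∑ j : Fin m,
              mvBracket N
                (Function.update g j
                  (mvBracket N
                    (fun i : Fin m =>
                      if hi : (i : ℕ) < m - 1 then f ⟨(i : ℕ), hi⟩ else g j))) x) :
    GJI n m (mvBracket N) := by
  intro f hf x
  have hfund : SatisfiesFundamentalIdentity (ContDiff ℝ (⊤ : ℕ∞)) (mvBracket N) :=
    fun f hf g hg => funext fun x => (hFI f hf g hg x).trans (Finset.sum_apply ..).symm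
  have hsum := congrFun (sum_sign_smul_jacobiTerm_eq_zero (by omega)
    (mvBracket_isSkewSymmetric N) hfund f hf) x
  rw [Finset.sum_apply] at hsum
  refine Eq.trans ?_ hsum
  refine sum_congr rfl fun σ _ => ?_
  rw [Pi.smul_apply, Units.smul_def, zsmul_eq_mul]
  rfl

/-- Let `N` be a smooth `m`-vector field on `ℝⁿ` with `n ≥ 1`,
`m ≥ 3`. If the induced `m`-ary bracket satisfies the fundamental identity
`{f₁, …, f_{m−1}, {g₁, …, g_m}} = ∑ⱼ {g₁, …, {f₁, …, f_{m−1}, gⱼ}, …, g_m}` for all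
smooth functions (i.e. `N` is a Nambu–Poisson tensor of order `m ≥ 3`), then the bracket
satisfies the generalized Jacobi identity of order `m` (i.e. `N` is a generalized
Poisson tensor). -/
theorem statement10 (n m : ℕ) (hn : 1 ≤ n) (hm : 3 ≤ m)
    (N : (Fin n → ℝ) → (((Fin n → ℝ) →L[ℝ] ℝ) [⋀^Fin m]→ₗ[ℝ] ℝ))
    (hN : ∀ φ : Fin m → ((Fin n → ℝ) →L[ℝ] ℝ), ContDiff ℝ (⊤ : ℕ∞) (fun x => N x φ))
    (hFI : ∀ f : Fin (m - 1) → ((Fin n → ℝ) → ℝ), (∀ i, ContDiff ℝ (⊤ : ℕ∞) (f i)) →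
      ∀ g : Fin m → ((Fin n → ℝ) → ℝ), (∀ j, ContDiff ℝ (⊤ : ℕ∞) (g j)) → ∀ x,
        mvBracket N
            (fun i : Fin m =>
              if hi : (i : ℕ) < m - 1 then f ⟨(i : ℕ), hi⟩ else mvBracket N g) x
          = ∑ j : Fin m,
              mvBracket N
                (Function.update g j
                  (mvBracket N
                    (fun i : Fin m =>
                      if hi : (i : ℕ) < m - 1 then f ⟨(i : ℕ), hi⟩ else g j))) x) :
    GJI n m (mvBracket N) :=
  statement10_general n m hm N hFI
end

section
/- On ℝ^{12} with the vector fields Γ, Y₁, …, Y₅ and functions h₁, h₂, h₃ of the rotational example, define the 4-ary bracket B(f₁, f₂, f₃, f₄) := det(M) + det(M′), where M (resp. M′) is the 4×4 matrix with (i,j) entry Z_i f_j for the rows (Z₁, Z₂, Z₃, Z₄) = (Γ, Y₁, Y₂, Y₃) (resp. (Γ, Y₁, Y₄, Y₅)). Then for every smooth function f on ℝ^{12}, B(f, h₁, h₂, h₃) = (x₁² + x₂²)²(x₅² + x₆²) · (Γ f); i.e. Γ is quasi-generalized Hamiltonian with multiplier (x₁² + x₂²)²(x₅² + x₆²). -/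
/-- The rotational vector field
`Γ = Σ_{i=1}^{6} (x_{2i} ∂/∂x_{2i−1} − x_{2i−1} ∂/∂x_{2i})` on `ℝ¹²`
(coordinates are 0-indexed: `x 0 = x₁`, …, `x 11 = x₁₂`). -/
def ΓRot : VF 12 := fun x =>
  ![x 1, -x 0, x 3, -x 2, x 5, -x 4, x 7, -x 6, x 9, -x 8, x 11, -x 10]

/-- `Y₁ = x₁ ∂/∂x₃ + x₂ ∂/∂x₄`. -/
def Yrot1 : VF 12 := fun x => ![0, 0, x 0, x 1, 0, 0, 0, 0, 0, 0, 0, 0]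

/-- `Y₂ = x₁ ∂/∂x₄ − x₂ ∂/∂x₃`. -/
def Yrot2 : VF 12 := fun x => ![0, 0, -x 1, x 0, 0, 0, 0, 0, 0, 0, 0, 0]

/-- `Y₃ = x₅ ∂/∂x₇ + x₆ ∂/∂x₈`. -/
def Yrot3 : VF 12 := fun x => ![0, 0, 0, 0, 0, 0, x 4, x 5, 0, 0, 0, 0]

/-- `Y₄ = x₅ ∂/∂x₈ − x₆ ∂/∂x₇`. -/
def Yrot4 : VF 12 := fun x => ![0, 0, 0, 0, 0, 0, -x 5, x 4, 0, 0, 0, 0]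

/-- `Y₅ = x₉ ∂/∂x₁₁ + x₁₀ ∂/∂x₁₂`. -/
def Yrot5 : VF 12 := fun x => ![0, 0, 0, 0, 0, 0, 0, 0, 0, 0, x 8, x 9]

/-- `h₁ = x₁x₃ + x₂x₄`. -/
def hRot1 : (Fin 12 → ℝ) → ℝ := fun x => x 0 * x 2 + x 1 * x 3

/-- `h₂ = x₁x₄ − x₂x₃`. -/
def hRot2 : (Fin 12 → ℝ) → ℝ := fun x => x 0 * x 3 - x 1 * x 2

/-- `h₃ = x₅x₇ + x₆x₈`. -/
def hRot3 : (Fin 12 → ℝ) → ℝ := fun x => x 4 * x 6 + x 5 * x 7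

noncomputable def prj (i : Fin 12) : (Fin 12 → ℝ) →L[ℝ] ℝ := ContinuousLinearMap.proj i

lemma fderiv_hRot1 (x v : Fin 12 → ℝ) :
    fderiv ℝ hRot1 x v = v 0 * x 2 + x 0 * v 2 + v 1 * x 3 + x 1 * v 3 := by
  have h : HasFDerivAt hRot1 (x 2 • prj 0 + x 0 • prj 2 + x 3 • prj 1 + x 1 • prj 3) x := by
    have h0 := hasFDerivAt_apply (𝕜 := ℝ) (0 : Fin 12) x
    have h1 := hasFDerivAt_apply (𝕜 := ℝ) (1 : Fin 12) x
    have h2 := hasFDerivAt_apply (𝕜 := ℝ) (2 : Fin 12) x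
    have h3 := hasFDerivAt_apply (𝕜 := ℝ) (3 : Fin 12) x
    have := (h0.mul h2).add (h1.mul h3)
    refine this.congr_fderiv ?_
    unfold prj; abel
  rw [h.fderiv]
  simp [prj, ContinuousLinearMap.proj]
  ring

lemma fderiv_hRot2 (x v : Fin 12 → ℝ) :
    fderiv ℝ hRot2 x v = v 0 * x 3 + x 0 * v 3 - v 1 * x 2 - x 1 * v 2 := by
  have h : HasFDerivAt hRot2 (x 3 • prj 0 + x 0 • prj 3 - x 2 • prj 1 - x 1 • prj 2) x := by
    have h0 := hasFDerivAt_apply (𝕜 := ℝ) (0 : Fin 12) x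
    have h1 := hasFDerivAt_apply (𝕜 := ℝ) (1 : Fin 12) x
    have h2 := hasFDerivAt_apply (𝕜 := ℝ) (2 : Fin 12) x
    have h3 := hasFDerivAt_apply (𝕜 := ℝ) (3 : Fin 12) x
    have := (h0.mul h3).sub (h1.mul h2)
    refine this.congr_fderiv ?_
    unfold prj; abel
  rw [h.fderiv]
  simp [prj, ContinuousLinearMap.proj]
  ring

lemma fderiv_hRot3 (x v : Fin 12 → ℝ) :
    fderiv ℝ hRot3 x v = v 4 * x 6 + x 4 * v 6 + v 5 * x 7 + x 5 * v 7 := by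
  have h : HasFDerivAt hRot3 (x 6 • prj 4 + x 4 • prj 6 + x 7 • prj 5 + x 5 • prj 7) x := by
    have h4 := hasFDerivAt_apply (𝕜 := ℝ) (4 : Fin 12) x
    have h5 := hasFDerivAt_apply (𝕜 := ℝ) (5 : Fin 12) x
    have h6 := hasFDerivAt_apply (𝕜 := ℝ) (6 : Fin 12) x
    have h7 := hasFDerivAt_apply (𝕜 := ℝ) (7 : Fin 12) x
    have := (h4.mul h6).add (h5.mul h7)
    refine this.congr_fderiv ?_
    unfold prj; abel
  rw [h.fderiv]
  simp [prj, ContinuousLinearMap.proj]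
  ring


lemma det_fin_four4 (M : Matrix (Fin 4) (Fin 4) ℝ) :
    M.det =
      M 0 0*M 1 1*M 2 2*M 3 3
      - M 0 0*M 1 1*M 2 3*M 3 2
      - M 0 0*M 1 2*M 2 1*M 3 3
      + M 0 0*M 1 2*M 2 3*M 3 1
      + M 0 0*M 1 3*M 2 1*M 3 2
      - M 0 0*M 1 3*M 2 2*M 3 1
      - M 0 1*M 1 0*M 2 2*M 3 3
      + M 0 1*M 1 0*M 2 3*M 3 2
      + M 0 1*M 1 2*M 2 0*M 3 3
      - M 0 1*M 1 2*M 2 3*M 3 0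
      - M 0 1*M 1 3*M 2 0*M 3 2
      + M 0 1*M 1 3*M 2 2*M 3 0
      + M 0 2*M 1 0*M 2 1*M 3 3
      - M 0 2*M 1 0*M 2 3*M 3 1
      - M 0 2*M 1 1*M 2 0*M 3 3
      + M 0 2*M 1 1*M 2 3*M 3 0
      + M 0 2*M 1 3*M 2 0*M 3 1
      - M 0 2*M 1 3*M 2 1*M 3 0
      - M 0 3*M 1 0*M 2 1*M 3 2
      + M 0 3*M 1 0*M 2 2*M 3 1
      + M 0 3*M 1 1*M 2 0*M 3 2
      - M 0 3*M 1 1*M 2 2*M 3 0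
      - M 0 3*M 1 2*M 2 0*M 3 1
      + M 0 3*M 1 2*M 2 1*M 3 0 := by
  have e1 : (Fin.succ 2 : Fin 4) = 3 := rfl
  have e2 : (Fin.castSucc 2 : Fin 4) = 2 := rfl
  have e3 : Fin.succAbove (2 : Fin 4) (2 : Fin 3) = 3 := rfl
  have e4 : Fin.succAbove (1 : Fin 4) (2 : Fin 3) = 3 := rfl
  have e5 : Fin.succAbove (3 : Fin 4) (2 : Fin 3) = 2 := rfl
  simp [Matrix.det_succ_row_zero, Fin.sum_univ_succ, e1, e2, e3, e4, e5]
  ring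

lemma ev_G_0 (x : Fin 12 → ℝ) : ΓRot x 0 = x 1 := rfl
lemma ev_G_1 (x : Fin 12 → ℝ) : ΓRot x 1 = -x 0 := rfl
lemma ev_G_2 (x : Fin 12 → ℝ) : ΓRot x 2 = x 3 := rfl
lemma ev_G_3 (x : Fin 12 → ℝ) : ΓRot x 3 = -x 2 := rfl
lemma ev_G_4 (x : Fin 12 → ℝ) : ΓRot x 4 = x 5 := rfl
lemma ev_G_5 (x : Fin 12 → ℝ) : ΓRot x 5 = -x 4 := rfl
lemma ev_G_6 (x : Fin 12 → ℝ) : ΓRot x 6 = x 7 := rfl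
lemma ev_G_7 (x : Fin 12 → ℝ) : ΓRot x 7 = -x 6 := rfl
lemma ev_Yrot1_0 (x : Fin 12 → ℝ) : Yrot1 x 0 = 0 := rfl
lemma ev_Yrot1_1 (x : Fin 12 → ℝ) : Yrot1 x 1 = 0 := rfl
lemma ev_Yrot1_2 (x : Fin 12 → ℝ) : Yrot1 x 2 = x 0 := rfl
lemma ev_Yrot1_3 (x : Fin 12 → ℝ) : Yrot1 x 3 = x 1 := rfl
lemma ev_Yrot1_4 (x : Fin 12 → ℝ) : Yrot1 x 4 = 0 := rfl
lemma ev_Yrot1_5 (x : Fin 12 → ℝ) : Yrot1 x 5 = 0 := rfl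
lemma ev_Yrot1_6 (x : Fin 12 → ℝ) : Yrot1 x 6 = 0 := rfl
lemma ev_Yrot1_7 (x : Fin 12 → ℝ) : Yrot1 x 7 = 0 := rfl
lemma ev_Yrot2_0 (x : Fin 12 → ℝ) : Yrot2 x 0 = 0 := rfl
lemma ev_Yrot2_1 (x : Fin 12 → ℝ) : Yrot2 x 1 = 0 := rfl
lemma ev_Yrot2_2 (x : Fin 12 → ℝ) : Yrot2 x 2 = -x 1 := rfl
lemma ev_Yrot2_3 (x : Fin 12 → ℝ) : Yrot2 x 3 = x 0 := rfl
lemma ev_Yrot2_4 (x : Fin 12 → ℝ) : Yrot2 x 4 = 0 := rfl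
lemma ev_Yrot2_5 (x : Fin 12 → ℝ) : Yrot2 x 5 = 0 := rfl
lemma ev_Yrot2_6 (x : Fin 12 → ℝ) : Yrot2 x 6 = 0 := rfl
lemma ev_Yrot2_7 (x : Fin 12 → ℝ) : Yrot2 x 7 = 0 := rfl
lemma ev_Yrot3_0 (x : Fin 12 → ℝ) : Yrot3 x 0 = 0 := rfl
lemma ev_Yrot3_1 (x : Fin 12 → ℝ) : Yrot3 x 1 = 0 := rfl
lemma ev_Yrot3_2 (x : Fin 12 → ℝ) : Yrot3 x 2 = 0 := rfl
lemma ev_Yrot3_3 (x : Fin 12 → ℝ) : Yrot3 x 3 = 0 := rfl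
lemma ev_Yrot3_4 (x : Fin 12 → ℝ) : Yrot3 x 4 = 0 := rfl
lemma ev_Yrot3_5 (x : Fin 12 → ℝ) : Yrot3 x 5 = 0 := rfl
lemma ev_Yrot3_6 (x : Fin 12 → ℝ) : Yrot3 x 6 = x 4 := rfl
lemma ev_Yrot3_7 (x : Fin 12 → ℝ) : Yrot3 x 7 = x 5 := rfl
lemma ev_Yrot4_0 (x : Fin 12 → ℝ) : Yrot4 x 0 = 0 := rfl
lemma ev_Yrot4_1 (x : Fin 12 → ℝ) : Yrot4 x 1 = 0 := rfl
lemma ev_Yrot4_2 (x : Fin 12 → ℝ) : Yrot4 x 2 = 0 := rfl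
lemma ev_Yrot4_3 (x : Fin 12 → ℝ) : Yrot4 x 3 = 0 := rfl
lemma ev_Yrot4_4 (x : Fin 12 → ℝ) : Yrot4 x 4 = 0 := rfl
lemma ev_Yrot4_5 (x : Fin 12 → ℝ) : Yrot4 x 5 = 0 := rfl
lemma ev_Yrot4_6 (x : Fin 12 → ℝ) : Yrot4 x 6 = -x 5 := rfl
lemma ev_Yrot4_7 (x : Fin 12 → ℝ) : Yrot4 x 7 = x 4 := rfl
lemma ev_Yrot5_0 (x : Fin 12 → ℝ) : Yrot5 x 0 = 0 := rfl
lemma ev_Yrot5_1 (x : Fin 12 → ℝ) : Yrot5 x 1 = 0 := rfl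
lemma ev_Yrot5_2 (x : Fin 12 → ℝ) : Yrot5 x 2 = 0 := rfl
lemma ev_Yrot5_3 (x : Fin 12 → ℝ) : Yrot5 x 3 = 0 := rfl
lemma ev_Yrot5_4 (x : Fin 12 → ℝ) : Yrot5 x 4 = 0 := rfl
lemma ev_Yrot5_5 (x : Fin 12 → ℝ) : Yrot5 x 5 = 0 := rfl
lemma ev_Yrot5_6 (x : Fin 12 → ℝ) : Yrot5 x 6 = 0 := rfl
lemma ev_Yrot5_7 (x : Fin 12 → ℝ) : Yrot5 x 7 = 0 := rfl

/-- For the rotational example on `ℝ¹²`, the 4-ary bracket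
`B(f₁,f₂,f₃,f₄) = det M + det M′` with rows `(Γ, Y₁, Y₂, Y₃)` resp. `(Γ, Y₁, Y₄, Y₅)`
satisfies `B(f, h₁, h₂, h₃) = (x₁² + x₂²)²(x₅² + x₆²) ⬝ (Γ f)` for every smooth `f`;
i.e. `Γ` is quasi-generalized Hamiltonian with multiplier `(x₁² + x₂²)²(x₅² + x₆²)`. -/
theorem statement13 :
    ∀ f : (Fin 12 → ℝ) → ℝ, ContDiff ℝ (⊤ : ℕ∞) f → ∀ x : Fin 12 → ℝ,
      detBracket ![ΓRot, Yrot1, Yrot2, Yrot3] ![f, hRot1, hRot2, hRot3] x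
        + detBracket ![ΓRot, Yrot1, Yrot4, Yrot5] ![f, hRot1, hRot2, hRot3] x
      = ((x 0) ^ 2 + (x 1) ^ 2) ^ 2 * ((x 4) ^ 2 + (x 5) ^ 2) * vAct ΓRot f x := by

  intro f _hf x
  simp only [detBracket, Matrix.of_apply, det_fin_four4,
    Matrix.cons_val_zero, Matrix.cons_val_one, Matrix.head_cons,
    Matrix.cons_val_two, Matrix.tail_cons, Matrix.cons_val_three]
  simp only [vAct, fderiv_hRot1, fderiv_hRot2, fderiv_hRot3,
    ev_G_0, ev_G_1, ev_G_2, ev_G_3, ev_G_4, ev_G_5, ev_G_6, ev_G_7, ev_Yrot1_0, ev_Yrot1_1, ev_Yrot1_2, ev_Yrot1_3, ev_Yrot1_4, ev_Yrot1_5, ev_Yrot1_6, ev_Yrot1_7, ev_Yrot2_0, ev_Yrot2_1, ev_Yrot2_2, ev_Yrot2_3, ev_Yrot2_4, ev_Yrot2_5, ev_Yrot2_6, ev_Yrot2_7, ev_Yrot3_0, ev_Yrot3_1, ev_Yrot3_2, ev_Yrot3_3, ev_Yrot3_4, ev_Yrot3_5, ev_Yrot3_6, ev_Yrot3_7, ev_Yrot4_0,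 ev_Yrot4_1, ev_Yrot4_2, ev_Yrot4_3, ev_Yrot4_4, ev_Yrot4_5, ev_Yrot4_6, ev_Yrot4_7, ev_Yrot5_0, ev_Yrot5_1, ev_Yrot5_2, ev_Yrot5_3, ev_Yrot5_4, ev_Yrot5_5, ev_Yrot5_6, ev_Yrot5_7]
  ring
end

section
/- On ℝ⁶ with coordinates (x₁, x₂, x₃, x₄, y₁, y₂), let Γ be the 4D cyclic Lotka–Volterra vector field extended by zero in the y₁, y₂ directions, let X_s = x₁∂/∂x₁ + x₂∂/∂x₂ + x₃∂/∂x₃ + x₄∂/∂x₄ be the Euler scaling field, and let Y₁ = ∂/∂y₁, Y₂ = ∂/∂y₂. Define the binary bracket {f, g} := (Γf)(Y₁g) − (Y₁f)(Γg) + (Γf)(X_s g) − (X_s f)(Γ g) + (Y₁ f)(Y₂ g) − (Y₂ f)(Y₁ g), induced by the bivector field 𝒩 = Γ∧Y₁ + Γ∧X_s + Y₁∧Y₂, and set h_Σ = x₁ + x₂ + x₃ + x₄. Then X_s h_Σ = h_Σ, the vector field (Γ h_Σ)·X_s − (X_s h_Σ)·Γ equals −h_Σ·Γ, and for every smooth function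 f on ℝ⁶, {f, h_Σ} = h_Σ · (Γ f); i.e. the Lotka–Volterra dynamics is quasi-Hamiltonian with respect to 𝒩 with multiplier h_Σ, which is a first integral of Γ. -/
/-- The 4D cyclic Lotka–Volterra vector field extended by zero to `ℝ⁶` with coordinates
`(x₁, x₂, x₃, x₄, y₁, y₂)` (0-indexed: `x 0 = x₁, …, x 3 = x₄, x 4 = y₁, x 5 = y₂`). -/
def ΓLV6 : VF 6 := fun x =>
  ![x 0 * (x 1 - x 3), x 1 * (x 2 - x 0), x 2 * (x 3 - x 1), x 3 * (x 0 - x 2), 0, 0]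

/-- The Euler scaling field `X_s = x₁∂/∂x₁ + x₂∂/∂x₂ + x₃∂/∂x₃ + x₄∂/∂x₄`. -/
def XsLV : VF 6 := fun x => ![x 0, x 1, x 2, x 3, 0, 0]

/-- The spectator field `Y₁ = ∂/∂y₁`. -/
def Y1LV : VF 6 := fun _ => ![0, 0, 0, 0, 1, 0]

/-- The spectator field `Y₂ = ∂/∂y₂`. -/
def Y2LV : VF 6 := fun _ => ![0, 0, 0, 0, 0, 1]

/-- `h_Σ = x₁ + x₂ + x₃ + x₄`. -/
def hSigma : (Fin 6 → ℝ) → ℝ := fun x => x 0 + x 1 + x 2 + x 3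

/-- The binary bracket induced by the bivector field `𝒩 = Γ∧Y₁ + Γ∧X_s + Y₁∧Y₂`:
`{f, g} = (Γf)(Y₁g) − (Y₁f)(Γg) + (Γf)(X_s g) − (X_s f)(Γg) + (Y₁f)(Y₂g) − (Y₂f)(Y₁g)`. -/
noncomputable def pbLV (f g : (Fin 6 → ℝ) → ℝ) : (Fin 6 → ℝ) → ℝ :=
  fun x =>
    vAct ΓLV6 f x * vAct Y1LV g x - vAct Y1LV f x * vAct ΓLV6 g x
      + vAct ΓLV6 f x * vAct XsLV g x - vAct XsLV f x * vAct ΓLV6 g x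
      + vAct Y1LV f x * vAct Y2LV g x - vAct Y2LV f x * vAct Y1LV g x

theorem vAct_continuousLinearMap {n : ℕ} (L : (Fin n → ℝ) →L[ℝ] ℝ) (X : VF n) :
    vAct X L = fun x => L (X x) := by
  funext x
  simp only [vAct, L.fderiv]

noncomputable def hSigmaCLM : (Fin 6 → ℝ) →L[ℝ] ℝ :=
  let π (i : Fin 6) : (Fin 6 → ℝ) →L[ℝ] ℝ := ContinuousLinearMap.proj i
  π 0 + π 1 + π 2 + π 3

theorem coe_hSigmaCLM : ⇑hSigmaCLM = hSigma := by
  funext x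
  rfl

theorem vAct_hSigma (X : VF 6) : vAct X hSigma = fun x => hSigma (X x) := by
  rw [← coe_hSigmaCLM, vAct_continuousLinearMap]

theorem vAct_XsLV_hSigma : vAct XsLV hSigma = hSigma := by
  rw [vAct_hSigma]
  rfl

-- The four terms of `Γ h_Σ` cancel in pairs: `x₁x₂ − x₂x₁`, `x₂x₃ − x₃x₂`, ...
theorem vAct_ΓLV6_hSigma : vAct ΓLV6 hSigma = 0 := by
  rw [vAct_hSigma]
  funext x
  simp only [hSigma, ΓLV6, Matrix.cons_val, Pi.zero_apply]
  ring

theorem vAct_Y1LV_hSigma : vAct Y1LV hSigma = 0 := by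
  rw [vAct_hSigma]
  funext x
  simp [hSigma, Y1LV]

theorem vAct_Y2LV_hSigma : vAct Y2LV hSigma = 0 := by
  rw [vAct_hSigma]
  funext x
  simp [hSigma, Y2LV]

/-- For the extended Lotka–Volterra system on `ℝ⁶`:
`X_s h_Σ = h_Σ`; the vector field `(Γ h_Σ)·X_s − (X_s h_Σ)·Γ` equals `−h_Σ·Γ`; for every
smooth `f`, `{f, h_Σ} = h_Σ ⬝ (Γ f)` (the dynamics is quasi-Hamiltonian with respect to
`𝒩 = Γ∧Y₁ + Γ∧X_s + Y₁∧Y₂` with multiplier `h_Σ`); and `h_Σ` is a first integral of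
`Γ`. -/
theorem statement16 :
    vAct XsLV hSigma = hSigma ∧
    (fun x : Fin 6 → ℝ =>
        vAct ΓLV6 hSigma x • XsLV x - vAct XsLV hSigma x • ΓLV6 x)
      = (fun x : Fin 6 → ℝ => -(hSigma x • ΓLV6 x)) ∧
    (∀ f : (Fin 6 → ℝ) → ℝ, ContDiff ℝ (⊤ : ℕ∞) f → ∀ x,
        pbLV f hSigma x = hSigma x * vAct ΓLV6 f x) ∧
    vAct ΓLV6 hSigma = 0 := by
  refine ⟨vAct_XsLV_hSigma, ?_, ?_, vAct_ΓLV6_hSigma⟩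
  · simp only [vAct_XsLV_hSigma, vAct_ΓLV6_hSigma, Pi.zero_apply, zero_smul, zero_sub]
  · intro f _ x
    simp only [pbLV, vAct_XsLV_hSigma, vAct_ΓLV6_hSigma, vAct_Y1LV_hSigma, vAct_Y2LV_hSigma,
      Pi.zero_apply]
    ring
end
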